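/- arXiv:1307.5780 — 5 statements merged into one kernel-verified Lean document; each statement's English description precedes it below -/
import Mathlib

section
/- Let A and H be abelian p-groups with H acting on A by automorphisms, and let λ be an irreducible (linear) character of A. Let B be an H-invariant subgroup of A of index p. Then either C_H(λ|_B) = C_H(λ), or |C_H(λ|_B)| = p·|C_H(λ)| and the trace character tr_H(λ)(x) = Σ_{h∈H} λ^h(x) vanishes for all x ∈ A \ B. -/
/-! For `g` fixing `λ` on `B`, the character `λ^g / λ` is trivial on `B`, hence a character of
`A ⧸ B`, a group of order `p`. A `p`-group acting on a set of size `p` with a fixed point fixes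
everything, so `H` acts trivially on `A ⧸ B`; this makes `g ↦ λ^g / λ` a homomorphism from
`C_H(λ|_B)` to the dual of `A ⧸ B`, with kernel `C_H(λ)` and image of order `1` or `p`. In the
second case choose `g` with `μ = λ^g / λ ≠ 1`: then `λ(g h x) = μ(x) λ(h x)` for all `h`, so
`tr_H(λ)(x) = μ(x) tr_H(λ)(x)` with `μ(x) ≠ 1` whenever `x ∉ B`. -/

open scoped BigOperators

noncomputable def trChar (H : Type*) {A : Type*} [CommGroup A] [Group H] [Fintype H]
    [MulDistribMulAction H A] (lam : A →* ℂˣ) (x : A) : ℂ :=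
  ∑ h : H, ((lam (h • x) : ℂˣ) : ℂ)

open Classical in
noncomputable def sigmaChar (H : Type*) {A : Type*} [CommGroup A] [Fintype A] [Group H]
    [Fintype H] [MulDistribMulAction H A] (lam : A →* ℂˣ) : ℕ :=
  ∑ x : A, if trChar H lam x ≠ 0 then Nat.card (MulAction.stabilizer H x) else 0

open Classical in
noncomputable def sigmaCharOn (H : Type*) {A : Type*} [CommGroup A] [Fintype A] [Group H]
    [Fintype H] [MulDistribMulAction H A] (B : Subgroup A) (lam : A →* ℂˣ) : ℕ :=
  ∑ x : A, if x ∈ B ∧ trChar H lam x ≠ 0 then Nat.card (MulAction.stabilizer H x) else 0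

def charStab (H : Type*) {A : Type*} [CommGroup A] [Group H] [MulDistribMulAction H A]
    (lam : A →* ℂˣ) : Set H := {h : H | ∀ a : A, lam (h • a) = lam a}

def charStabOn (H : Type*) {A : Type*} [CommGroup A] [Group H] [MulDistribMulAction H A]
    (B : Subgroup A) (lam : A →* ℂˣ) : Set H := {h : H | ∀ a ∈ B, lam (h • a) = lam a}

theorem IsPGroup.coe_smul_eq_coe_of_index_eq {p : ℕ} [Fact p.Prime] {G H : Type*} [Group G]
    [Group H] [MulDistribMulAction H G] (hH : IsPGroup p H) {B : Subgroup G}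
    (hB : ∀ (h : H) (a : G), a ∈ B → h • a ∈ B) (hBidx : B.index = p) (h : H) (x : G) :
    ((h • x : G) : G ⧸ B) = x := by
  have : MulAction.QuotientAction H B :=
    ⟨fun b a a' ha => by rw [← smul_inv', ← smul_mul']; exact hB b _ ha⟩
  have hcard : Nat.card (G ⧸ B) = p := hBidx
  have : Finite (G ⧸ B) := Nat.finite_of_card_ne_zero (hcard ▸ (Fact.out : p.Prime).ne_zero)
  have hdvd : p ∣ Nat.card (MulAction.fixedPoints H (G ⧸ B)) :=
    Nat.modEq_zero_iff_dvd.mp ((hH.card_modEq_card_fixedPoints (G ⧸ B)).symm.trans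
      (hcard ▸ Nat.modEq_zero_iff_dvd.mpr dvd_rfl))
  have hone : ((1 : G) : G ⧸ B) ∈ MulAction.fixedPoints H (G ⧸ B) := fun h => by
    rw [MulAction.Quotient.smul_coe, smul_one]
  have huniv : MulAction.fixedPoints H (G ⧸ B) = Set.univ := by
    refine Set.eq_of_subset_of_ncard_le (Set.subset_univ _) ?_
    rw [Set.ncard_univ, hcard, ← Nat.card_coe_set_eq]
    exact Nat.le_of_dvd (Nat.card_pos_iff.mpr ⟨⟨_, hone⟩, inferInstance⟩) hdvd
  exact (huniv ▸ Set.mem_univ (x : G ⧸ B) : _ ∈ MulAction.fixedPoints H (G ⧸ B)) h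

theorem MonoidHom.apply_ne_one_of_prime_card {Q M : Type*} [Group Q] [Monoid M]
    [Fact (Nat.card Q).Prime] {χ : Q →* M} (hχ : χ ≠ 1) {q : Q} (hq : q ≠ 1) :
    χ q ≠ 1 := by
  obtain hker | hker := χ.ker.eq_bot_or_eq_top_of_prime_card
  · exact fun h => hq ((χ.ker_eq_bot_iff).mp hker (h.trans χ.map_one.symm))
  · exact absurd (MonoidHom.ker_eq_top_iff.mp hker) hχ

theorem trChar_eq_zero_of_smul_eq_mul {A H : Type*} [CommGroup A] [Group H] [Fintype H]
    [MulDistribMulAction H A] (lam : A →* ℂˣ) (g : H) {x : A} {c : ℂ} (hc : c ≠ 1)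
    (hg : ∀ h : H, (lam (g • h • x) : ℂ) = c * lam (h • x)) : trChar H lam x = 0 := by
  have hmul : trChar H lam x = c * trChar H lam x := by
    calc trChar H lam x = ∑ h : H, ((lam ((g * h) • x) : ℂˣ) : ℂ) :=
          (Equiv.sum_comp (Equiv.mulLeft g) (fun h => ((lam (h • x) : ℂˣ) : ℂ))).symm
      _ = c * trChar H lam x := by simp only [mul_smul, hg, trChar, Finset.mul_sum]
  have : (1 - c) * trChar H lam x = 0 := by rw [sub_mul, one_mul, ← hmul, sub_self]
  exact (mul_eq_zero.mp this).resolve_left (sub_ne_zero.mpr hc.symm)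

section Twist

variable {A H : Type*} [CommGroup A] [Group H] [MulDistribMulAction H A]

def twist {M : Type*} [CommGroup M] (lam : A →* M) (g : H) : A →* M :=
  lam.comp (MulDistribMulAction.toMonoidHom A g) / lam

@[simp]
theorem twist_apply {M : Type*} [CommGroup M] (lam : A →* M) (g : H) (a : A) :
    twist lam g a = lam (g • a) / lam a :=
  rfl

theorem twist_mul_apply {M : Type*} [CommGroup M] (lam : A →* M) (g k : H) (a : A) :
    twist lam (g * k) a = twist lam g (k • a) * twist lam k a := by
  simp [mul_smul]

theorem apply_smul_eq_twist_mul {M : Type*} [CommGroup M] (lam : A →* M) (g : H) (a : A) :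
    lam (g • a) = twist lam g a * lam a := by
  rw [twist_apply, div_mul_cancel]

theorem mem_charStab_iff_twist_eq_one {lam : A →* ℂˣ} {g : H} :
    g ∈ charStab H lam ↔ twist lam g = 1 := by
  simp [charStab, DFunLike.ext_iff, div_eq_one]

theorem charStab_subset_charStabOn (B : Subgroup A) (lam : A →* ℂˣ) :
    charStab H lam ⊆ charStabOn H B lam :=
  fun _ hg a _ => hg a

def charStabSubgroup (lam : A →* ℂˣ) : Subgroup H where
  carrier := charStab H lam
  one_mem' a := by rw [one_smul]
  mul_mem' {h k} hh hk a := by rw [mul_smul, hh, hk]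
  inv_mem' {h} hh a := by rw [← hh (h⁻¹ • a), smul_inv_smul]

def charStabOnSubgroup (B : Subgroup A) (hB : ∀ (h : H) (a : A), a ∈ B → h • a ∈ B)
    (lam : A →* ℂˣ) : Subgroup H where
  carrier := charStabOn H B lam
  one_mem' a _ := by rw [one_smul]
  mul_mem' {h k} hh hk a ha := by rw [mul_smul, hh _ (hB k a ha), hk a ha]
  inv_mem' {h} hh a ha := by rw [← hh (h⁻¹ • a) (hB h⁻¹ a ha), smul_inv_smul]

variable {B : Subgroup A} {hB : ∀ (h : H) (a : A), a ∈ B → h • a ∈ B} {lam : A →* ℂˣ}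

theorem twist_eq_one_of_mem_charStabOnSubgroup {g : H} (hg : g ∈ charStabOnSubgroup B hB lam)
    {b : A} (hb : b ∈ B) : twist lam g b = 1 := by
  simp [hg b hb]

theorem twist_apply_smul_of_mem_charStabOnSubgroup
    (hfix : ∀ (h : H) (x : A), ((h • x : A) : A ⧸ B) = x) {g : H}
    (hg : g ∈ charStabOnSubgroup B hB lam) (k : H) (a : A) :
    twist lam g (k • a) = twist lam g a := by
  obtain ⟨b, hb, hab⟩ : ∃ b ∈ B, k • a = a * b :=
    ⟨a⁻¹ * k • a, QuotientGroup.eq.mp (hfix k a).symm, by rw [mul_inv_cancel_left]⟩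
  rw [hab, map_mul, twist_eq_one_of_mem_charStabOnSubgroup hg hb, mul_one]

variable (B hB lam) in
def twistHom (hfix : ∀ (h : H) (x : A), ((h • x : A) : A ⧸ B) = x) :
    charStabOnSubgroup B hB lam →* (A ⧸ B →* ℂˣ) where
  toFun g := QuotientGroup.lift B (twist lam g)
    (fun _ hb => twist_eq_one_of_mem_charStabOnSubgroup g.2 hb)
  map_one' := by ext a; exact congrArg Units.val (by simp : twist lam (1 : H) a = 1)
  map_mul' g k := by
    ext a
    show ((twist lam (g * k : H) a : ℂˣ) : ℂ) = (twist lam g a * twist lam k a : ℂˣ)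
    rw [twist_mul_apply, twist_apply_smul_of_mem_charStabOnSubgroup hfix g.2]
    rfl

variable (hfix : ∀ (h : H) (x : A), ((h • x : A) : A ⧸ B) = x)

theorem twistHom_apply_coe (g : charStabOnSubgroup B hB lam) (a : A) :
    twistHom B hB lam hfix g a = twist lam g a :=
  rfl

theorem twistHom_eq_one_iff {g : charStabOnSubgroup B hB lam} :
    twistHom B hB lam hfix g = 1 ↔ (g : H) ∈ charStab H lam := by
  rw [mem_charStab_iff_twist_eq_one]
  constructor <;> intro h <;> ext a
  · exact congrArg Units.val (DFunLike.congr_fun h (a : A ⧸ B))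
  · exact congrArg Units.val (DFunLike.congr_fun h a)

theorem ker_twistHom :
    (twistHom B hB lam hfix).ker =
      (charStabSubgroup lam).subgroupOf (charStabOnSubgroup B hB lam) := by
  ext g
  exact twistHom_eq_one_iff hfix

theorem card_charStabOn_eq_card_range_twistHom_mul :
    Nat.card (charStabOn H B lam) =
      Nat.card (twistHom B hB lam hfix).range * Nat.card (charStab H lam) := by
  have hker : Nat.card (twistHom B hB lam hfix).ker = Nat.card (charStab H lam) := by
    rw [ker_twistHom hfix]
    exact Nat.card_congr (Subgroup.subgroupOfEquivOfLe
      (fun g hg => charStab_subset_charStabOn B lam hg)).toEquiv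
  rw [← hker, ← Nat.card_congr (QuotientGroup.quotientKerEquivRange _).toEquiv]
  exact Subgroup.card_eq_card_quotient_mul_card_subgroup (α := charStabOnSubgroup B hB lam) _

theorem card_range_twistHom_dvd_index [B.FiniteIndex] :
    Nat.card (twistHom B hB lam hfix).range ∣ B.index := by
  have : NeZero (Monoid.exponent (A ⧸ B)) := ⟨Monoid.exponent_ne_zero_of_finite⟩
  rw [Subgroup.index, ← CommGroup.card_monoidHom_of_hasEnoughRootsOfUnity (A ⧸ B) ℂ]
  exact Subgroup.card_subgroup_dvd_card _

end Twist

theorem stmt1_general {p : ℕ} (hp : p.Prime) {A H : Type} [CommGroup A]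
    [CommGroup H] [Fintype H] [MulDistribMulAction H A]
    (hH : IsPGroup p H)
    (lam : A →* ℂˣ) (B : Subgroup A)
    (hBinv : ∀ (h : H) (a : A), a ∈ B → h • a ∈ B) (hBidx : B.index = p) :
    charStabOn H B lam = charStab H lam ∨
      (Nat.card (charStabOn H B lam) = p * Nat.card (charStab H lam) ∧
        ∀ x : A, x ∉ B → trChar H lam x = 0) := by
  have : Fact p.Prime := ⟨hp⟩
  have hfix := hH.coe_smul_eq_coe_of_index_eq hBinv hBidx
  by_cases hφ : twistHom B hBinv lam hfix = 1
  · refine .inl (Set.Subset.antisymm (fun g hg => ?_) (charStab_subset_charStabOn B lam))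
    exact (twistHom_eq_one_iff hfix).mp (DFunLike.congr_fun hφ ⟨g, hg⟩)
  have : B.FiniteIndex := ⟨hBidx ▸ hp.ne_zero⟩
  have hrange : Nat.card (twistHom B hBinv lam hfix).range = p :=
    ((Nat.dvd_prime hp).mp (hBidx ▸ card_range_twistHom_dvd_index hfix)).resolve_left
      (mt (Subgroup.card_eq_one.trans MonoidHom.range_eq_bot_iff).mp hφ)
  refine .inr ⟨by rw [card_charStabOn_eq_card_range_twistHom_mul (hB := hBinv) hfix, hrange],
    fun x hx => ?_⟩
  obtain ⟨g, hg⟩ := DFunLike.ne_iff.mp hφ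
  have : Fact (Nat.card (A ⧸ B)).Prime := ⟨show B.index.Prime from hBidx ▸ hp⟩
  have hc := MonoidHom.apply_ne_one_of_prime_card hg (q := (x : A ⧸ B))
    ((QuotientGroup.eq_one_iff x).not.mpr hx)
  rw [twistHom_apply_coe] at hc
  refine trChar_eq_zero_of_smul_eq_mul lam (g : H) (Units.val_eq_one.not.mpr hc) fun k => ?_
  rw [apply_smul_eq_twist_mul, twist_apply_smul_of_mem_charStabOnSubgroup hfix g.2, Units.val_mul]
  rfl

theorem stmt1 {p : ℕ} (hp : p.Prime) {A H : Type} [CommGroup A] [Fintype A]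
    [CommGroup H] [Fintype H] [MulDistribMulAction H A]
    (hA : IsPGroup p A) (hH : IsPGroup p H)
    (lam : A →* ℂˣ) (B : Subgroup A)
    (hBinv : ∀ (h : H) (a : A), a ∈ B → h • a ∈ B) (hBidx : B.index = p) :
    charStabOn H B lam = charStab H lam ∨
      (Nat.card (charStabOn H B lam) = p * Nat.card (charStab H lam) ∧
        ∀ x : A, x ∉ B → trChar H lam x = 0) :=
  stmt1_general hp hH lam B hBinv hBidx
end

section
/- Let G be a finite group, χ ∈ Irr(G), and N a normal subgroup of G such that the restriction χ|_N is irreducible. Then for every x ∈ G, |χ(x)|² = (χ(1)/|N|) · Σ_{g∈N} χ([x,g]). -/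
open scoped BigOperators

noncomputable def IsIrreducibleCharacter (G : Type) [Group G] (χ : G → ℂ) : Prop :=
  ∃ V : FDRep ℂ G, CategoryTheory.Simple V ∧ ∀ g : G, FDRep.character V g = χ g

open Classical in
noncomputable def inducedChar {G : Type} [Group G] [Fintype G] (K : Subgroup G)
    (θ : K → ℂ) : G → ℂ := fun g =>
  (Nat.card K : ℂ)⁻¹ * ∑ x : G, if h : x⁻¹ * g * x ∈ K then θ ⟨x⁻¹ * g * x, h⟩ else 0

/-! Let `V` afford `χ`. The operator `M = ∑_{g ∈ N} ρ(g⁻¹ x g)` commutes with `ρ(N)`, and `V`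
stays irreducible on `N`, so by Schur's lemma `M = c • 1`. Taking traces gives
`c χ(1) = |N| χ(x)`, while `∑_{g ∈ N} χ([x, g]) = tr(ρ(x⁻¹) M) = c χ(x⁻¹) = c · conj χ(x)`. -/

open Module Polynomial CategoryTheory Representation

namespace Module.End

section

variable {K V : Type*} [Field K] [AddCommGroup V] [Module K V] {f : End K V}

theorem HasEigenvalue.isRoot_of_aeval_eq_zero {μ : K} (hμ : f.HasEigenvalue μ) {p : K[X]}
    (hp : aeval f p = 0) : p.IsRoot μ :=
  eval_eq_zero_of_dvd_of_eval_eq_zero (minpoly.dvd K f hp) (isRoot_of_hasEigenvalue hμ)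

theorem IsSemisimple.trace_aeval [IsAlgClosed K] [FiniteDimensional K V] (hf : f.IsSemisimple)
    (p : K[X]) :
    LinearMap.trace K V (aeval f p) =
      ∑ μ : f.Eigenvalues, p.eval (μ : K) * finrank K (f.eigenspace μ) := by
  classical
  have hint : DirectSum.IsInternal fun μ : f.Eigenvalues => f.eigenspace μ :=
    DirectSum.isInternal_ne_bot_iff.mpr <|
      DirectSum.isInternal_submodule_of_iSupIndep_of_iSup_eq_top f.eigenspaces_iSupIndep
        hf.iSup_eigenspace_eq_top
  have haeval {μ : K} {v : V} (hv : v ∈ f.eigenspace μ) : aeval f p v = p.eval μ • v :=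
    aeval_apply_of_mem_apply_eq_smul (mem_eigenspace_iff.mp hv)
  have hmaps (μ : K) : Set.MapsTo (aeval f p) (f.eigenspace μ) (f.eigenspace μ) :=
    fun v hv => haeval hv ▸ Submodule.smul_mem _ _ hv
  rw [LinearMap.trace_eq_sum_trace_restrict hint fun μ => hmaps μ]
  refine Finset.sum_congr rfl fun μ _ => ?_
  have hrestrict : (aeval f p).restrict (hmaps μ) = p.eval (μ : K) • 1 := by
    ext ⟨v, hv⟩
    exact haeval hv
  rw [hrestrict, map_smul, LinearMap.trace_one, smul_eq_mul]

end

theorem trace_pow_pred_eq_conj_trace {V : Type*} [AddCommGroup V] [Module ℂ V]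
    [FiniteDimensional ℂ V] {f : End ℂ V} {n : ℕ} (hn : n ≠ 0) (hf : f ^ n = 1) :
    LinearMap.trace ℂ V (f ^ (n - 1)) = starRingEnd ℂ (LinearMap.trace ℂ V f) := by
  have hfX : aeval f (X ^ n - 1 : ℂ[X]) = 0 := by simp [hf]
  have hss : f.IsSemisimple :=
    isSemisimple_of_squarefree_aeval_eq_zero
      (X_pow_sub_one_separable_iff.mpr (Nat.cast_ne_zero.mpr hn)).squarefree hfX
  have hpow := hss.trace_aeval (X ^ (n - 1))
  have hid := hss.trace_aeval X
  rw [aeval_X_pow] at hpow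
  rw [aeval_X] at hid
  rw [hpow, hid, map_sum]
  refine Finset.sum_congr rfl fun μ _ => ?_
  have hμn : (μ : ℂ) ^ n = 1 := by
    simpa [sub_eq_zero] using HasEigenvalue.isRoot_of_aeval_eq_zero (μ := (μ : ℂ)) μ.2 hfX
  have hμ : (μ : ℂ) ^ (n - 1) = starRingEnd ℂ μ := by
    rw [← Complex.inv_eq_conj (Complex.norm_eq_one_of_pow_eq_one hμn hn),
      pow_sub₀ _ (ne_zero_pow hn (hμn ▸ one_ne_zero)) (Nat.one_le_iff_ne_zero.mpr hn), hμn,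
      pow_one, one_mul]
  simp [hμ]

end Module.End

theorem Representation.sum_conj_mem_invariants_linHom_comp_subtype {k V G : Type*} [CommRing k]
    [AddCommGroup V] [Module k V] [Group G] (ρ : Representation k G V) (N : Subgroup G)
    [Fintype N] (x : G) :
    ∑ g : N, ρ ((g : G)⁻¹ * x * g) ∈
      (linHom (ρ.comp N.subtype) (ρ.comp N.subtype)).invariants := by
  intro n
  simp only [linHom_apply, MonoidHom.comp_apply, Subgroup.coe_subtype, ← Module.End.mul_eq_comp,
    Finset.mul_sum, Finset.sum_mul, ← map_mul]
  refine Fintype.sum_equiv (Equiv.mulRight n⁻¹) _ _ fun g => ?_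
  simp only [Equiv.coe_mulRight, Subgroup.coe_mul, InvMemClass.coe_inv, mul_inv_rev]
  group

namespace FDRep

theorem char_inv_eq_conj {G : Type*} [Group G] [Finite G] (V : FDRep ℂ G) (g : G) :
    V.character g⁻¹ = starRingEnd ℂ (V.character g) := by
  have hcard : Nat.card G ≠ 0 := Nat.card_pos.ne'
  have hinv : g⁻¹ = g ^ (Nat.card G - 1) := by
    refine (eq_inv_of_mul_eq_one_left ?_).symm
    rw [← pow_succ, Nat.sub_add_cancel (Nat.one_le_iff_ne_zero.mpr hcard), pow_card_eq_one']
  rw [hinv, character, map_pow, character]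
  exact Module.End.trace_pow_pred_eq_conj_trace hcard (by rw [← map_pow, pow_card_eq_one', map_one])

universe u

variable {k : Type u} [Field k] [IsAlgClosed k] {G : Type u} [Group G]

theorem simple_of_character_eq [CharZero k] [Fintype G] {V W : FDRep k G} [Simple W]
    (h : ∀ g, V.character g = W.character g) : Simple V := by
  rw [simple_iff_char_is_norm_one]
  simpa only [h] using (simple_iff_char_is_norm_one W).mp ‹_›

theorem exists_eq_smul_one_of_mem_invariants (V : FDRep k G) [Simple V] {f : V →ₗ[k] V}
    (hf : f ∈ (linHom V.ρ V.ρ).invariants) : ∃ c : k, f = c • 1 := by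
  have hrank : finrank k (linHom V.ρ V.ρ).invariants = 1 :=
    (linHom.invariantsEquivFDRepHom V V).finrank_eq.trans (finrank_endomorphism_simple_eq_one k V)
  have hone : (1 : V →ₗ[k] V) ∈ (linHom V.ρ V.ρ).invariants := fun g => by
    rw [linHom_apply, ← Module.End.mul_eq_comp, ← Module.End.mul_eq_comp, one_mul, ← map_mul,
      mul_inv_cancel, map_one]
  have hone_ne : (⟨1, hone⟩ : (linHom V.ρ V.ρ).invariants) ≠ 0 := by
    intro h0
    have : Subsingleton (V →ₗ[k] V) := subsingleton_of_zero_eq_one (congrArg Subtype.val h0).symm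
    simp [finrank_zero_of_subsingleton] at hrank
  obtain ⟨c, hc⟩ := (finrank_eq_one_iff_of_nonzero' _ hone_ne).mp hrank ⟨f, hf⟩
  exact ⟨c, (congrArg Subtype.val hc).symm⟩

theorem character_one_mul_sum_character_commutator (V : FDRep k G) (N : Subgroup G) [Fintype N]
    [Simple (FDRep.of (V.ρ.comp N.subtype))] (x : G) :
    V.character 1 * ∑ g : N, V.character (x⁻¹ * (g : G)⁻¹ * x * g) =
      Nat.card N * V.character x * V.character x⁻¹ := by
  set M := ∑ g : N, V.ρ ((g : G)⁻¹ * x * g)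
  obtain ⟨c, hc⟩ : ∃ c : k, M = c • 1 :=
    exists_eq_smul_one_of_mem_invariants (FDRep.of (V.ρ.comp N.subtype))
      (sum_conj_mem_invariants_linHom_comp_subtype V.ρ N x)
  have htrace : c * V.character 1 = Nat.card N * V.character x := by
    have hconj (g : N) : LinearMap.trace k V (V.ρ ((g : G)⁻¹ * x * g)) = V.character x := by
      have := V.char_conj x (g : G)⁻¹
      rwa [inv_inv] at this
    have htrM : LinearMap.trace k V M = Nat.card N * V.character x := by
      simp only [M, map_sum, hconj, Finset.sum_const, Finset.card_univ, nsmul_eq_mul,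
        Nat.card_eq_fintype_card]
    rw [← htrM, hc, map_smul, LinearMap.trace_one, char_one, smul_eq_mul]
  have hsum : ∑ g : N, V.character (x⁻¹ * (g : G)⁻¹ * x * g) = c * V.character x⁻¹ :=
    calc ∑ g : N, V.character (x⁻¹ * (g : G)⁻¹ * x * g)
        = LinearMap.trace k V (V.ρ x⁻¹ * M) := by
          simp only [M, Finset.mul_sum, map_sum, ← map_mul, character, mul_assoc]
      _ = c * V.character x⁻¹ := by
          rw [hc, mul_smul_comm, mul_one, map_smul, smul_eq_mul, character]
  rw [hsum]
  linear_combination V.character x⁻¹ * htrace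

end FDRep

open Classical in
theorem stmt10_general {G : Type} [Group G] [Fintype G] (χ : G → ℂ)
    (hχ : IsIrreducibleCharacter G χ) (N : Subgroup G)
    (hres : IsIrreducibleCharacter N (fun n : N => χ n)) (x : G) :
    (‖χ x‖ : ℂ) ^ 2
      = χ 1 / (Nat.card N : ℂ) * ∑ g : N, χ (x⁻¹ * (g : G)⁻¹ * x * g) := by
  obtain ⟨V, -, hV⟩ := hχ
  obtain ⟨W, _, hW⟩ := hres
  have : Simple (FDRep.of (V.ρ.comp N.subtype)) :=
    FDRep.simple_of_character_eq (W := W) fun n => (hV n).trans (hW n).symm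
  have key : χ 1 * ∑ g : N, χ (x⁻¹ * (g : G)⁻¹ * x * g) = Nat.card N * (‖χ x‖ : ℂ) ^ 2 := by
    have := V.character_one_mul_sum_character_commutator N x
    simpa only [V.char_inv_eq_conj, mul_assoc, Complex.mul_conj', hV] using this
  have hN : (Nat.card N : ℂ) ≠ 0 := Nat.cast_ne_zero.mpr Nat.card_pos.ne'
  rw [div_mul_eq_mul_div, key, mul_div_cancel_left₀ _ hN]

open Classical in
theorem stmt10 {G : Type} [Group G] [Fintype G] (χ : G → ℂ)
    (hχ : IsIrreducibleCharacter G χ) (N : Subgroup G) (hN : N.Normal)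
    (hres : IsIrreducibleCharacter N (fun n : N => χ n)) (x : G) :
    (‖χ x‖ : ℂ) ^ 2
      = χ 1 / (Nat.card N : ℂ) * ∑ g : N, χ (x⁻¹ * (g : G)⁻¹ * x * g) :=
  stmt10_general χ hχ N hres x
end

section
/- Let P be a p-group of nilpotence class at most 3 and χ a faithful irreducible character of P. Then the support Supp(χ) = {g ∈ P : χ(g) ≠ 0} contains exactly |P|/χ(1)² conjugacy classes of P. -/
/-!
Fix `g` with `χ g ≠ 0`. Schur's lemma makes `∑ₓ ρ(x g⁻¹ x⁻¹)` a scalar, so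
`∑ₓ χ⁅g, x⁆ = |P| χ(g) χ(g⁻¹) / χ(1)`. A central `z` acts as a scalar `λ(z)`, and `λ(z) ≠ 1` for
`z ≠ 1` by faithfulness; since `χ a = χ(⁅w, a⁆ a) = λ⁅w, a⁆ χ a`, the character vanishes on every
`a` having a nontrivial central commutator `⁅w, a⁆`. In class `≤ 3` all `⁅v, ⁅g, x⁆⁆` are central,
so `χ⁅g, x⁆ ≠ 0` forces `⁅g, x⁆` central, and then trivial because `χ g ≠ 0`. Hence
`∑ₓ χ⁅g, x⁆ = |C(g)| χ(1)`, i.e. `χ(g) χ(g⁻¹) = χ(1)² / |g^P|`, and the first orthogonality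
relation `∑ χ(g) χ(g⁻¹) = |P|` then counts every class in the support with weight `χ(1)²`.
-/

open scoped BigOperators

open CategoryTheory Module Subgroup
open scoped commutatorElement

theorem commutatorElement_mem_center_of_lowerCentralSeries_three_eq_bot {G : Type*} [Group G]
    (h : (⊤ : Subgroup G).lowerCentralSeries 3 = ⊥) (v a b : G) : ⁅v, ⁅a, b⁆⁆ ∈ center G := by
  have hle : (⊤ : Subgroup G).lowerCentralSeries 2 ≤ center G := by
    rw [← centralizer_univ, ← coe_top, ← commutator_eq_bot_iff_le_centralizer]
    exact h
  rw [← commutatorElement_inv]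
  refine inv_mem (hle (commutator_mem_commutator ?_ (mem_top v)))
  exact commutator_mem_commutator (mem_top a) (mem_top b)

theorem Subgroup.nat_card_carrier_mul_nat_card_centralizer {G : Type*} [Group G] (g : G) :
    Nat.card (ConjClasses.mk g).carrier * Nat.card (centralizer {g}) = Nat.card G := by
  rw [nat_card_centralizer_nat_card_stabilizer, mul_comm, Nat.card_coe_set_eq,
    ← ConjAct.orbit_eq_carrier_conjClasses, ← MulAction.index_stabilizer, card_mul_index]
  rfl

theorem ConjClasses.sum_eq_nat_card_mul {G : Type*} [Group G] [Fintype G] {K : Type*} [Field K]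
    [CharZero K] (S : G → Prop) [DecidablePred S] (hS : ∀ g h, S (h * g * h⁻¹) ↔ S g)
    (f : G → K) (c : K)
    (hf : ∀ g, Nat.card (ConjClasses.mk g).carrier * f g = if S g then c else 0) :
    ∑ g, f g = Nat.card {C : ConjClasses G // ∃ g, ConjClasses.mk g = C ∧ S g} * c := by
  classical
  have hfiber : ∀ C : ConjClasses G, ∑ g ∈ Finset.univ.filter (ConjClasses.mk · = C), f g =
      if ∃ g, ConjClasses.mk g = C ∧ S g then c else 0 := by
    intro C
    obtain ⟨r, rfl⟩ := ConjClasses.mk_surjective C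
    have hcard : (Finset.univ.filter (ConjClasses.mk · = ConjClasses.mk r)).card =
        Nat.card (ConjClasses.mk r).carrier := by
      rw [Nat.card_eq_fintype_card, ← Set.toFinset_card]
      congr 1
      ext g
      simp [ConjClasses.mem_carrier_iff_mk_eq]
    have hSconj : ∀ g, ConjClasses.mk g = ConjClasses.mk r → (S g ↔ S r) := fun g hg => by
      obtain ⟨h, rfl⟩ := isConj_iff.mp (ConjClasses.mk_eq_mk_iff_isConj.mp hg.symm)
      exact hS r h
    have hpos : (Nat.card (ConjClasses.mk r).carrier : K) ≠ 0 := by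
      rw [← hcard]
      exact_mod_cast (Finset.card_pos.mpr ⟨r, by simp⟩).ne'
    have hex : (∃ g, ConjClasses.mk g = ConjClasses.mk r ∧ S g) ↔ S r :=
      ⟨fun ⟨g, hg, hSg⟩ => (hSconj g hg).mp hSg, fun h => ⟨r, rfl, h⟩⟩
    apply mul_left_cancel₀ hpos
    rw [Finset.mul_sum, Finset.sum_congr rfl fun g hg => ?_, Finset.sum_const, hcard, nsmul_eq_mul,
      if_congr hex rfl rfl]
    have hgr := (Finset.mem_filter.mp hg).2
    rw [← hgr, hf g]
    exact if_congr (hSconj g hgr) rfl rfl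
  rw [← Finset.sum_fiberwise Finset.univ ConjClasses.mk f,
    Finset.sum_congr rfl fun C _ => hfiber C, Finset.sum_ite, Finset.sum_const_zero, add_zero,
    Finset.sum_const, nsmul_eq_mul,
    Nat.card_eq_fintype_card, Fintype.card_subtype]

namespace FDRep

variable {G : Type} [Group G] (V : FDRep ℂ G) [Simple V]

theorem natCast_finrank_ne_zero : (finrank ℂ V : ℂ) ≠ 0 := by
  refine Nat.cast_ne_zero.mpr fun h => id_nonzero V ?_
  have : Subsingleton V := finrank_zero_iff.mp h
  ext v
  exact Subsingleton.elim _ _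

theorem eq_smul_one_of_forall_commute (f : V →ₗ[ℂ] V) (hf : ∀ g, Commute f (V.ρ g)) :
    f = (LinearMap.trace ℂ V f / finrank ℂ V) • 1 := by
  let F : V ⟶ V := ⟨FGModuleCat.ofHom f, fun g => by ext x; exact LinearMap.congr_fun (hf g) x⟩
  obtain ⟨c, hc⟩ := endomorphism_simple_eq_smul_id ℂ F
  have hfc : f = c • 1 := by
    ext x
    exact (congrArg (fun φ : V ⟶ V => φ.hom.hom.hom x) hc).symm
  rw [hfc, map_smul, LinearMap.trace_one, smul_eq_mul,
    mul_div_cancel_right₀ _ (natCast_finrank_ne_zero V)]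

theorem ρ_eq_smul_one_of_mem_center {z : G} (hz : z ∈ center G) :
    V.ρ z = (V.character z / finrank ℂ V) • 1 :=
  eq_smul_one_of_forall_commute V _ fun g => by
    rw [Commute, SemiconjBy, ← map_mul, ← map_mul, mem_center_iff.mp hz g]

theorem character_mul_of_mem_center {z : G} (hz : z ∈ center G) (b : G) :
    V.character (z * b) = V.character z / finrank ℂ V * V.character b := by
  rw [character, map_mul, ρ_eq_smul_one_of_mem_center V hz, smul_mul_assoc, one_mul, map_smul,
    smul_eq_mul]
  rfl

theorem character_eq_zero_of_commutatorElement_mem_center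
    (hfaith : ∀ g, V.character g = V.character 1 → g = 1) {w a : G} (hc : ⁅w, a⁆ ∈ center G)
    (hne : ⁅w, a⁆ ≠ 1) : V.character a = 0 := by
  have hscalar : V.character ⁅w, a⁆ / finrank ℂ V ≠ 1 := fun h =>
    hne (hfaith _ (by rwa [char_one, ← div_eq_one_iff_eq (natCast_finrank_ne_zero V)]))
  have hconj : V.character a = V.character ⁅w, a⁆ / finrank ℂ V * V.character a := by
    rw [← character_mul_of_mem_center V hc, commutatorElement_def, inv_mul_cancel_right, char_conj]
  by_contra ha
  exact hscalar (by simpa [ha] using hconj.symm)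

theorem commutatorElement_eq_one_of_character_ne_zero
    (hfaith : ∀ g, V.character g = V.character 1 → g = 1)
    (hclass : ∀ v a b : G, ⁅v, ⁅a, b⁆⁆ ∈ center G) {g x : G} (hg : V.character g ≠ 0)
    (hgx : V.character ⁅g, x⁆ ≠ 0) : ⁅g, x⁆ = 1 := by
  have hcenter : ⁅g, x⁆ ∈ center G := mem_center_iff.mpr fun v =>
    commutatorElement_eq_one_iff_mul_comm.mp <| by_contra fun hne =>
      hgx (character_eq_zero_of_commutatorElement_mem_center V hfaith (hclass v g x) hne)
  have hxg : ⁅x, g⁆ = 1 := by_contra fun hne =>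
    hg (character_eq_zero_of_commutatorElement_mem_center V hfaith
      (by rw [← commutatorElement_inv]; exact inv_mem hcenter) hne)
  rw [← commutatorElement_inv, hxg, inv_one]

variable [Fintype G]

theorem sum_ρ_conj (a : G) :
    ∑ x, V.ρ (x * a * x⁻¹) = (Nat.card G * V.character a / finrank ℂ V) • 1 := by
  have hcomm : ∀ y, Commute (∑ x, V.ρ (x * a * x⁻¹)) (V.ρ y) := fun y => by
    rw [Commute, SemiconjBy, Finset.sum_mul, Finset.mul_sum]
    refine Fintype.sum_equiv (Equiv.mulLeft y⁻¹) _ _ fun x => ?_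
    simp only [Equiv.coe_mulLeft, ← map_mul]
    congr 1
    group
  have htrace : ∀ x, LinearMap.trace ℂ V (V.ρ (x * a * x⁻¹)) = V.character a := char_conj V a
  rw [eq_smul_one_of_forall_commute V _ hcomm, map_sum, Finset.sum_congr rfl fun x _ => htrace x,
    Finset.sum_const, Finset.card_univ, Fintype.card_eq_nat_card, nsmul_eq_mul]

theorem sum_character_mul_conj (a b : G) :
    ∑ x, V.character (a * (x * b * x⁻¹)) =
      Nat.card G * V.character a * V.character b / finrank ℂ V :=
  calc ∑ x, V.character (a * (x * b * x⁻¹))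
      _ = LinearMap.trace ℂ V (V.ρ a * ∑ x, V.ρ (x * b * x⁻¹)) := by
        rw [Finset.mul_sum, map_sum]
        simp only [← map_mul]
        rfl
      _ = _ := by
        rw [sum_ρ_conj, mul_smul_comm, mul_one, map_smul, smul_eq_mul]
        unfold character
        ring

theorem sum_character_mul_character_inv : ∑ g, V.character g * V.character g⁻¹ = Nat.card G := by
  have hG : (Nat.card G : ℂ) ≠ 0 := by exact_mod_cast Nat.card_pos.ne'
  have := invertibleOfNonzero hG
  have h := FDRep.char_orthonormal V V
  rw [if_pos ⟨Iso.refl V⟩, inv_mul_eq_one₀ hG] at h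
  exact h.symm

theorem sum_character_commutatorElement (hfaith : ∀ g, V.character g = V.character 1 → g = 1)
    (hclass : ∀ v a b : G, ⁅v, ⁅a, b⁆⁆ ∈ center G) {g : G} (hg : V.character g ≠ 0) :
    ∑ x, V.character ⁅g, x⁆ = Nat.card (centralizer {g}) * finrank ℂ V := by
  classical
  have hterm :
      ∀ x, V.character ⁅g, x⁆ = if x ∈ centralizer {g} then (finrank ℂ V : ℂ) else 0 := by
    intro x
    split_ifs with hx
    · rw [commutatorElement_eq_one_iff_mul_comm.mpr (mem_centralizer_singleton_iff.mp hx).symm,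
        char_one]
    · by_contra hgx
      refine hx (mem_centralizer_singleton_iff.mpr ?_)
      exact (commutatorElement_eq_one_iff_mul_comm.mp
        (commutatorElement_eq_one_of_character_ne_zero V hfaith hclass hg hgx)).symm
  simp [hterm, Finset.sum_ite, Nat.card_eq_fintype_card, Fintype.card_subtype]

theorem nat_card_carrier_mul_character_mul_character_inv
    (hfaith : ∀ g, V.character g = V.character 1 → g = 1)
    (hclass : ∀ v a b : G, ⁅v, ⁅a, b⁆⁆ ∈ center G) {g : G} (hg : V.character g ≠ 0) :
    Nat.card (ConjClasses.mk g).carrier * (V.character g * V.character g⁻¹) = finrank ℂ V ^ 2 := by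
  have hC : (Nat.card (centralizer {g}) : ℂ) ≠ 0 := by exact_mod_cast Nat.card_pos.ne'
  have hsum := sum_character_mul_conj V g g⁻¹
  simp only [← mul_assoc, ← commutatorElement_def,
    sum_character_commutatorElement V hfaith hclass hg] at hsum
  have horbit :
      (Nat.card (ConjClasses.mk g).carrier : ℂ) * Nat.card (centralizer {g}) = Nat.card G := by
    exact_mod_cast nat_card_carrier_mul_nat_card_centralizer g
  field_simp [natCast_finrank_ne_zero V] at hsum
  apply mul_right_cancel₀ hC
  linear_combination V.character g * V.character g⁻¹ * horbit - hsum

end FDRep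

theorem stmt13_general {P : Type} [Group P] [Fintype P]
    (hclass : (⊤ : Subgroup P).lowerCentralSeries 3 = ⊥)
    (χ : P → ℂ) (hχ : IsIrreducibleCharacter P χ)
    (hfaith : ∀ g : P, χ g = χ 1 → g = 1) (d : ℕ) (hd : χ 1 = d) :
    Nat.card {c : ConjClasses P // ∃ g : P, ConjClasses.mk g = c ∧ χ g ≠ 0} * d ^ 2
      = Nat.card P := by
  obtain ⟨V, hV, hVχ⟩ := hχ
  obtain rfl : V.character = χ := funext hVχ
  have hdim : (finrank ℂ V : ℂ) = d := by rw [← FDRep.char_one, hd]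
  have hcount := ConjClasses.sum_eq_nat_card_mul (fun g => V.character g ≠ 0)
    (fun g h => by rw [FDRep.char_conj]) (fun g => V.character g * V.character g⁻¹) ((d : ℂ) ^ 2)
    fun g => by
      split_ifs with hg
      · rw [← hdim]
        exact V.nat_card_carrier_mul_character_mul_character_inv hfaith
          (commutatorElement_mem_center_of_lowerCentralSeries_three_eq_bot hclass) hg
      · rw [not_not.mp hg, zero_mul, mul_zero]
  rw [FDRep.sum_character_mul_character_inv] at hcount
  exact_mod_cast hcount.symm

theorem stmt13 {p : ℕ} (hp : p.Prime) {P : Type} [Group P] [Fintype P]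
    (hP : IsPGroup p P) (hclass : (⊤ : Subgroup P).lowerCentralSeries 3 = ⊥)
    (χ : P → ℂ) (hχ : IsIrreducibleCharacter P χ)
    (hfaith : ∀ g : P, χ g = χ 1 → g = 1) (d : ℕ) (hd : χ 1 = d) :
    Nat.card {c : ConjClasses P // ∃ g : P, ConjClasses.mk g = c ∧ χ g ≠ 0} * d ^ 2
      = Nat.card P :=
  stmt13_general hclass χ hχ hfaith d hd
end

section
/- Let p be an odd prime, P a p-group of nilpotence class at most 3, and χ an irreducible character of P. If x ∈ P with χ(x) ≠ 0, then χ(x^m) ≠ 0 for every integer m. -/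
open scoped BigOperators

/-!
For a simple representation `V`, Schur's lemma makes the class sum `∑ h, ρ (h * y * h⁻¹)` a
scalar with trace `|G| χ(y)`, so `χ(y) ≠ 0` iff `∑ h, ρ ⁅h, y⁆ ≠ 0`. In class at most three the
derived subgroup `A` is abelian and `⁅G, A⁆` is central. A common eigenvector of `A` that
`∑ h, ρ ⁅h, x⁆` does not kill, with eigencharacter `ν`, reduces the problem to the scalar sums
`∑ h, ν ⁅h, x ^ n⁆`. For each `y` the function `h ↦ ν ⁅h, y⁆` is quadratic with bicharacter
`(h, k) ↦ ν ⁅h, ⁅k, y⁆⁆`, and a Gauss-sum computation shows that its sum is nonzero exactly when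
it is trivial on the radical of the bicharacter. Replacing `x` by `x ^ n` raises the bicharacter to the
`n`-th power; as `q = gcd(n, |G|)` is odd it divides `n.choose 2` along with `n`, and this
transports triviality on the radical from `x` to `x ^ n`.
-/

open Finset ComplexConjugate CategoryTheory
open scoped commutatorElement

theorem commutatorElement_mem_commutator {G : Type*} [Group G] (g h : G) :
    ⁅g, h⁆ ∈ commutator G :=
  Subgroup.commutator_mem_commutator (Subgroup.mem_top g) (Subgroup.mem_top h)

theorem commutatorElement_mul_left_eq {G : Type*} [Group G] (a b c : G) :
    ⁅a * b, c⁆ = ⁅a, ⁅b, c⁆⁆ * ⁅b, c⁆ * ⁅a, c⁆ := by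
  simp [commutatorElement_def, mul_assoc]

namespace ClassAtMostThree

open Subgroup

variable {G : Type*} [Group G] (hG : (⊤ : Subgroup G).lowerCentralSeries 3 = ⊥)
include hG

theorem commute_of_mem_commutator {a b : G} (ha : a ∈ commutator G) (hb : b ∈ commutator G) :
    Commute a b := by
  have h : ⁅commutator G, commutator G⁆ = ⊥ :=
    commutator_commutator_eq_bot_of_rotate (by rwa [commutator_comm ⊤]) hG
  exact (mem_centralizer_iff.mp (commutator_eq_bot_iff_le_centralizer.mp h ha) b hb).symm

theorem commute_commutatorElement {w : G} (hw : w ∈ commutator G) (g z : G) :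
    Commute ⁅g, w⁆ z := by
  have hmem : ⁅w, g⁆ ∈ center G :=
    commutator_top_right_eq_bot_iff_le_center.mp hG (commutator_mem_commutator hw (mem_top g))
  rw [← commutatorElement_inv]
  exact Commute.inv_left (mem_center_iff.mp hmem z).symm

theorem commutatorElement_mul_right_of_mem {w' : G} (hw' : w' ∈ commutator G) (g w : G) :
    ⁅g, w * w'⁆ = ⁅g, w⁆ * ⁅g, w'⁆ := by
  rw [commutatorElement_mul_right_eq_mul_conj, mul_assoc _ w,
    ← (commute_commutatorElement hG hw' g w).eq]
  group

theorem commutatorElement_mul_left_of_mem {w : G} (hw : w ∈ commutator G) (g g' : G) :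
    ⁅g * g', w⁆ = ⁅g, w⁆ * ⁅g', w⁆ := by
  rw [commutatorElement_mul_left_eq_conj_mul, ← (commute_commutatorElement hG hw g' g).eq,
    mul_inv_cancel_right, (commute_commutatorElement hG hw g' _).eq]

theorem commutatorElement_pow_right_of_mem {w : G} (hw : w ∈ commutator G) (g : G) (n : ℕ) :
    ⁅g, w ^ n⁆ = ⁅g, w⁆ ^ n := by
  induction n with
  | zero => simp
  | succ n ih => rw [pow_succ, commutatorElement_mul_right_of_mem hG hw, ih, pow_succ]

theorem commutatorElement_pow_left_of_mem {w : G} (hw : w ∈ commutator G) (g : G) (n : ℕ) :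
    ⁅g ^ n, w⁆ = ⁅g, w⁆ ^ n := by
  induction n with
  | zero => simp
  | succ n ih => rw [pow_succ, commutatorElement_mul_left_of_mem hG hw, ih, pow_succ]

theorem commutatorElement_commutatorElement_mul_left (g k k' y : G) :
    ⁅g, ⁅k * k', y⁆⁆ = ⁅g, ⁅k, y⁆⁆ * ⁅g, ⁅k', y⁆⁆ := by
  have hw := commutatorElement_mem_commutator k' y
  rw [commutatorElement_mul_left_eq,
    commutatorElement_mul_right_of_mem hG (commutatorElement_mem_commutator k y),
    commutatorElement_mul_right_of_mem hG hw,
    (commute_commutatorElement hG hw k g).symm.commutator_eq, one_mul,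
    (commute_commutatorElement hG hw g _).eq]

theorem commutatorElement_pow_right (g y : G) (n : ℕ) :
    ⁅g, y ^ n⁆ = ⁅g, y⁆ ^ n * ⁅y, ⁅g, y⁆⁆ ^ n.choose 2 := by
  have ha := commutatorElement_mem_commutator g y
  have hc : ∀ j : ℕ, ∀ z : G, Commute (⁅y, ⁅g, y⁆⁆ ^ j) z := fun j z =>
    (commute_commutatorElement hG ha y z).pow_left j
  induction n with
  | zero => simp
  | succ n ih =>
    have hconj : y ^ n * ⁅g, y⁆ * (y ^ n)⁻¹ = ⁅y, ⁅g, y⁆⁆ ^ n * ⁅g, y⁆ := by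
      rw [← commutatorElement_pow_left_of_mem hG ha, ← conj_eq_commutatorElement_mul,
        MulAut.conj_apply]
    calc ⁅g, y ^ (n + 1)⁆ = ⁅g, y ^ n⁆ * (y ^ n * ⁅g, y⁆ * (y ^ n)⁻¹) := by
          rw [pow_succ, commutatorElement_mul_right_eq_mul_conj]; simp only [mul_assoc]
      _ = ⁅g, y⁆ ^ n * ⁅g, y⁆ * (⁅y, ⁅g, y⁆⁆ ^ n.choose 2 * ⁅y, ⁅g, y⁆⁆ ^ n) := by
          rw [ih, hconj, (hc n _).eq, ← mul_assoc, mul_assoc (⁅g, y⁆ ^ n), (hc _ _).eq]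
          simp only [mul_assoc]
      _ = ⁅g, y⁆ ^ (n + 1) * ⁅y, ⁅g, y⁆⁆ ^ (n + 1).choose 2 := by
          rw [← pow_succ, ← pow_add, Nat.choose_succ_succ' n 1, Nat.choose_one_right,
            Nat.add_comm (n.choose 2)]

theorem commutatorElement_commutatorElement_pow_right (g k y : G) (n : ℕ) :
    ⁅g, ⁅k, y ^ n⁆⁆ = ⁅g, ⁅k, y⁆⁆ ^ n := by
  have hw := commutatorElement_mem_commutator k y
  rw [commutatorElement_pow_right hG,
    commutatorElement_mul_right_of_mem hG (pow_mem (commutatorElement_mem_commutator _ _) _),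
    ((commute_commutatorElement hG hw y g).pow_left _).symm.commutator_eq, mul_one,
    commutatorElement_pow_right_of_mem hG hw]

end ClassAtMostThree

theorem pow_eq_one_of_dvd {M : Type*} [Monoid M] {a : M} {m n : ℕ} (h : a ^ m = 1) (hmn : m ∣ n) :
    a ^ n = 1 :=
  orderOf_dvd_iff_pow_eq_one.mp ((orderOf_dvd_of_pow_eq_one h).trans hmn)

theorem Odd.dvd_choose_two {q n : ℕ} (hq : Odd q) (hqn : q ∣ n) : q ∣ n.choose 2 := by
  have h2 : q ∣ 2 * n.choose 2 := by
    rw [Nat.choose_two_right, Nat.mul_div_cancel' (Nat.even_mul_pred_self n).two_dvd]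
    exact hqn.mul_right _
  exact (Nat.Coprime.symm (Nat.coprime_two_left.mpr hq)).dvd_of_dvd_mul_left h2

theorem Finset.sum_eq_zero_of_map_mul_left {G R : Type*} [Group G] [CommRing R]
    [NoZeroDivisors R] {s : Finset G} {β : G → R} {u : G} (hs : ∀ g, u * g ∈ s ↔ g ∈ s)
    (hβ : ∀ g ∈ s, β (u * g) = β u * β g) (hu : β u ≠ 1) :
    ∑ g ∈ s, β g = 0 := by
  have h : ∑ g ∈ s, β g = β u * ∑ g ∈ s, β g := by
    rw [mul_sum]
    have hmem : ∀ g ∈ s, u⁻¹ * g ∈ s := fun g hg => (hs _).mp (by rwa [mul_inv_cancel_left])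
    refine sum_nbij' (u⁻¹ * ·) (u * ·) hmem (fun g hg => (hs g).mpr hg)
      (fun g _ => mul_inv_cancel_left u g) (fun g _ => inv_mul_cancel_left u g) fun g hg => ?_
    rw [← hβ _ (hmem g hg), mul_inv_cancel_left]
  have h' : (β u - 1) * ∑ g ∈ s, β g = 0 := by linear_combination -h
  exact (mul_eq_zero.mp h').resolve_left (sub_ne_zero.mpr hu)

structure IsQuadraticCharacter {G : Type*} [Group G] (f : G → ℂ) (B : G → G → ℂ) : Prop where
  norm_eq_one : ∀ g, ‖f g‖ = 1
  map_mul : ∀ g h, f (g * h) = f g * f h * B g h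
  mul_left : ∀ g g' h, B (g * g') h = B g h * B g' h
  mul_right : ∀ g h h', B g (h * h') = B g h * B g h'

namespace IsQuadraticCharacter

variable {G : Type*} [Group G] {f : G → ℂ} {B : G → G → ℂ} (hf : IsQuadraticCharacter f B)
include hf

theorem apply_ne_zero (g : G) : f g ≠ 0 :=
  norm_ne_zero_iff.mp (by rw [hf.norm_eq_one]; exact one_ne_zero)

theorem bilin_ne_zero (g h : G) : B g h ≠ 0 := by
  intro h0
  have := hf.map_mul g h
  rw [h0, mul_zero] at this
  exact hf.apply_ne_zero _ this

theorem bilin_one_left (h : G) : B 1 h = 1 := by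
  have := hf.mul_left 1 1 h
  rw [mul_one] at this
  exact (mul_eq_left₀ (hf.bilin_ne_zero 1 h)).mp this.symm

theorem bilin_one_right (g : G) : B g 1 = 1 := by
  have := hf.mul_right g 1 1
  rw [mul_one] at this
  exact (mul_eq_left₀ (hf.bilin_ne_zero g 1)).mp this.symm

theorem map_one : f 1 = 1 := by
  have := hf.map_mul 1 1
  rw [mul_one, hf.bilin_one_left, mul_one] at this
  exact (mul_eq_left₀ (hf.apply_ne_zero 1)).mp this.symm

theorem bilin_pow_left (g h : G) (n : ℕ) : B (g ^ n) h = B g h ^ n := by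
  induction n with
  | zero => simp [hf.bilin_one_left]
  | succ n ih => rw [pow_succ, hf.mul_left, ih, pow_succ]

theorem bilin_pow_right (g h : G) (n : ℕ) : B g (h ^ n) = B g h ^ n := by
  induction n with
  | zero => simp [hf.bilin_one_right]
  | succ n ih => rw [pow_succ, hf.mul_right, ih, pow_succ]

theorem map_pow (g : G) (n : ℕ) : f (g ^ n) = f g ^ n * B g g ^ n.choose 2 := by
  induction n with
  | zero => simp [hf.map_one]
  | succ n ih =>
    rw [pow_succ, hf.map_mul, ih, hf.bilin_pow_left, Nat.choose_succ_succ' n 1,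
      Nat.choose_one_right, pow_succ, pow_add]
    ring


section Fintype

variable [Fintype G]

theorem sum_bilin_left [DecidablePred fun u : G => ∀ k, B k u = 1] (u : G) :
    ∑ k, B k u = if ∀ k, B k u = 1 then (Fintype.card G : ℂ) else 0 := by
  split_ifs with hu
  · simp [hu]
  · obtain ⟨k, hk⟩ := not_forall.mp hu
    exact sum_eq_zero_of_map_mul_left (by simp) (fun g _ => hf.mul_left k g u) hk

theorem sum_mul_conj_sum [DecidablePred fun u : G => ∀ k, B k u = 1] :
    (∑ g, f g) * conj (∑ g, f g) =
      Fintype.card G * ∑ u ∈ univ.filter fun u => ∀ k, B k u = 1, f u := by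
  have hshift : ∀ k u, f (k * u) * conj (f k) = f u * B k u := fun k u => by
    rw [hf.map_mul, mul_comm (f k), mul_assoc, mul_assoc, mul_comm _ (conj _),
      ← mul_assoc (f k), Complex.mul_conj', hf.norm_eq_one]
    simp [mul_comm]
  calc (∑ g, f g) * conj (∑ g, f g) = ∑ k, ∑ u, f (k * u) * conj (f k) := by
        rw [map_sum, sum_mul_sum, sum_comm]
        exact sum_congr rfl fun k _ => (Equiv.sum_comp (Equiv.mulLeft k) _).symm
    _ = ∑ u, f u * ∑ k, B k u := by
        simp_rw [hshift, mul_sum]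
        exact sum_comm
    _ = Fintype.card G * ∑ u ∈ univ.filter fun u => ∀ k, B k u = 1, f u := by
        simp_rw [hf.sum_bilin_left, mul_ite, mul_zero, ← sum_filter, mul_sum, mul_comm]

theorem sum_ne_zero_iff : ∑ g, f g ≠ 0 ↔ ∀ u, (∀ k, B k u = 1) → f u = 1 := by
  classical
  set R := univ.filter fun u : G => ∀ k, B k u = 1
  have hcard : (Fintype.card G : ℂ) ≠ 0 := Nat.cast_ne_zero.mpr Fintype.card_ne_zero
  have key : (∑ g, f g) * conj (∑ g, f g) = Fintype.card G * ∑ u ∈ R, f u := hf.sum_mul_conj_sum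
  have hsum : ∑ g, f g ≠ 0 ↔ ∑ u ∈ R, f u ≠ 0 := by
    constructor
    · intro h h0
      rw [h0, mul_zero] at key
      exact mul_ne_zero h ((map_ne_zero _).mpr h) key
    · intro h h0
      rw [h0, zero_mul] at key
      exact mul_ne_zero hcard h key.symm
  rw [hsum]
  constructor
  · intro hR u hu
    by_contra hfu
    refine hR (sum_eq_zero_of_map_mul_left (fun g => ?_) (fun g hg => ?_) hfu)
    · simp only [R, mem_filter, mem_univ, true_and, hf.mul_right, hu, one_mul]
    · rw [hf.map_mul, (mem_filter.mp hg).2 u, mul_one]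
  · intro h1
    rw [sum_congr rfl fun u hu => h1 u (mem_filter.mp hu).2, sum_const, nsmul_one]
    exact Nat.cast_ne_zero.mpr (card_ne_zero.mpr ⟨1, by simp [hf.bilin_one_right]⟩)

end Fintype

end IsQuadraticCharacter

namespace ClassAtMostThree

variable {G : Type*} [Group G] (hG : (⊤ : Subgroup G).lowerCentralSeries 3 = ⊥)
  {ν : G → ℂ} (hν₁ : ν 1 = 1) (hν : ∀ a ∈ commutator G, ∀ b ∈ commutator G, ν (a * b) = ν a * ν b)
include hν₁ hν

theorem map_pow_of_mem {a : G} (ha : a ∈ commutator G) (n : ℕ) : ν (a ^ n) = ν a ^ n := by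
  induction n with
  | zero => simpa using hν₁
  | succ n ih => rw [pow_succ, hν _ (pow_mem ha n) _ ha, ih, pow_succ]

theorem pow_card_eq_one_of_mem [Finite G] {a : G} (ha : a ∈ commutator G) :
    ν a ^ Nat.card G = 1 := by
  rw [← map_pow_of_mem hν₁ hν ha, pow_card_eq_one', hν₁]

include hG

theorem isQuadraticCharacter [Finite G] (y : G) :
    IsQuadraticCharacter (fun g => ν ⁅g, y⁆) (fun g h : G => ν ⁅g, ⁅h, y⁆⁆) := by
  have hA : ∀ a b : G, ⁅a, b⁆ ∈ commutator G := commutatorElement_mem_commutator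
  refine ⟨fun g => ?_, fun g h => ?_, fun g g' h => ?_, fun g h h' => ?_⟩
  · exact Complex.norm_eq_one_of_pow_eq_one (pow_card_eq_one_of_mem hν₁ hν (hA g y))
      Nat.card_pos.ne'
  · rw [commutatorElement_mul_left_eq, hν _ (mul_mem (hA _ _) (hA _ _)) _ (hA _ _),
      hν _ (hA _ _) _ (hA _ _)]
    ring
  · rw [commutatorElement_mul_left_of_mem hG (hA h y), hν _ (hA _ _) _ (hA _ _)]
  · rw [commutatorElement_commutatorElement_mul_left hG, hν _ (hA _ _) _ (hA _ _)]

theorem sum_commutatorElement_pow_ne_zero [Fintype G] (hodd : Odd (Nat.card G)) {x : G}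
    (hx : ∑ g : G, ν ⁅g, x⁆ ≠ 0) (n : ℕ) : ∑ g : G, ν ⁅g, x ^ n⁆ ≠ 0 := by
  have hA : ∀ a b : G, ⁅a, b⁆ ∈ commutator G := commutatorElement_mem_commutator
  have hQ := isQuadraticCharacter hG hν₁ hν
  rw [(hQ x).sum_ne_zero_iff] at hx
  rw [(hQ (x ^ n)).sum_ne_zero_iff]
  intro u hu
  set q := n.gcd (Nat.card G)
  have hq : Odd q := hodd.of_dvd_nat (Nat.gcd_dvd_right _ _)
  have hBq (g : G) : ν ⁅g, ⁅u, x⁆⁆ ^ q = 1 := by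
    refine pow_gcd_eq_one.mpr ⟨?_, pow_card_eq_one_of_mem hν₁ hν (hA _ _)⟩
    rw [← map_pow_of_mem hν₁ hν (hA _ _), ← commutatorElement_commutatorElement_pow_right hG]
    exact hu g
  have hfq : ν ⁅u, x⁆ ^ q = 1 := by
    have h := hx (u ^ q) fun g => by rw [(hQ x).bilin_pow_right]; exact hBq g
    rwa [(hQ x).map_pow, pow_eq_one_of_dvd (hBq u) (hq.dvd_choose_two dvd_rfl), mul_one] at h
  rw [commutatorElement_pow_right hG, hν _ (pow_mem (hA _ _) _) _ (pow_mem (hA _ _) _),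
    map_pow_of_mem hν₁ hν (hA _ _), map_pow_of_mem hν₁ hν (hA _ _),
    pow_eq_one_of_dvd hfq (Nat.gcd_dvd_left _ _),
    pow_eq_one_of_dvd (hBq x) (hq.dvd_choose_two (Nat.gcd_dvd_left _ _)), one_mul]

end ClassAtMostThree

theorem Module.End.isSemisimple_of_pow_eq_one {K M : Type*} [Field K] [AddCommGroup M]
    [Module K M] {f : Module.End K M} {n : ℕ} (hn : (n : K) ≠ 0) (hf : f ^ n = 1) :
    f.IsSemisimple := by
  refine isSemisimple_of_squarefree_aeval_eq_zero
    (Polynomial.X_pow_sub_one_separable_iff.mpr hn).squarefree ?_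
  simp [hf]

namespace Representation

variable {k G W : Type*} [Field k] [Group G] [AddCommGroup W] [Module k W]
  (ρ : Representation k G W)

theorem exists_common_eigenvector_apply_ne_zero [IsAlgClosed k] [CharZero k] [Finite G]
    [FiniteDimensional k W] {H : Subgroup G} (hH : ∀ a ∈ H, ∀ b ∈ H, Commute a b)
    {T : Module.End k W} (hT : T ≠ 0) :
    ∃ (ν : G → k) (v : W), (∀ a ∈ H, ρ a v = ν a • v) ∧ T v ≠ 0 := by
  classical
  have hcomm : Pairwise fun a b : H => Commute (ρ a) (ρ b) :=
    fun a b _ => (hH a a.2 b b.2).map ρ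
  have hss (a : H) : Module.End.IsSemisimple (ρ a) :=
    Module.End.isSemisimple_of_pow_eq_one (Nat.cast_ne_zero.mpr Nat.card_pos.ne')
      (by rw [← map_pow, pow_card_eq_one', map_one])
  have htop : ⨆ χ : H → k, ⨅ a : H, Module.End.eigenspace (ρ a) (χ a) = ⊤ := by
    simpa only [fun a : H => (hss a).isFinitelySemisimple.maxGenEigenspace_eq_eigenspace] using
      Module.End.iSup_iInf_maxGenEigenspace_eq_top_of_iSup_maxGenEigenspace_eq_top_of_commute _
        hcomm fun a => Module.End.iSup_maxGenEigenspace_eq_top _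
  by_contra! h
  apply hT
  rw [← LinearMap.ker_eq_top, eq_top_iff, ← htop]
  refine iSup_le fun χ v hv => h (fun g => if hg : g ∈ H then χ ⟨g, hg⟩ else 0) v fun a ha => ?_
  simpa [ha] using Module.End.mem_eigenspace_iff.mp ((Submodule.mem_iInf _).mp hv ⟨a, ha⟩)

variable {ρ} {H : Subgroup G} {ν : G → k} {v : W} (hv : v ≠ 0) (hν : ∀ a ∈ H, ρ a v = ν a • v)
include hv hν

theorem eigenvalue_one : ν 1 = 1 :=
  smul_left_injective k hv (by simpa using (hν 1 H.one_mem).symm)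

theorem eigenvalue_mul {a b : G} (ha : a ∈ H) (hb : b ∈ H) : ν (a * b) = ν a * ν b :=
  smul_left_injective k hv (by
    simp only [← hν _ (H.mul_mem ha hb), map_mul, Module.End.mul_apply, hν _ hb, map_smul, hν _ ha,
      smul_smul, mul_comm (ν b)])

end Representation

namespace FDRep

variable {k G : Type*} [Field k] [Group G] (V : FDRep k G) [Simple V]

theorem nontrivial_of_simple : Nontrivial V := by
  by_contra h
  rw [not_nontrivial_iff_subsingleton] at h
  exact id_nonzero V
    (Action.hom_ext _ _ (FGModuleCat.hom_ext (LinearMap.ext fun _ => Subsingleton.elim _ _)))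

variable [Fintype G]

theorem exists_sum_conj_eq_smul_id [IsAlgClosed k] (g : G) :
    ∃ c : k, ∑ h, V.ρ (h * g * h⁻¹) = c • LinearMap.id := by
  have hcomm (a : G) : V.ρ a * ∑ h, V.ρ (h * g * h⁻¹) = (∑ h, V.ρ (h * g * h⁻¹)) * V.ρ a := by
    rw [mul_sum, sum_mul, ← Equiv.sum_comp (Equiv.mulLeft a) fun h => V.ρ (h * g * h⁻¹) * V.ρ a]
    refine sum_congr rfl fun h _ => ?_
    simp only [Equiv.coe_mulLeft, ← map_mul]
    congr 1
    group
  let f : V ⟶ V := ⟨FGModuleCat.ofHom (∑ h, V.ρ (h * g * h⁻¹)),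
    fun a => by ext v; exact LinearMap.congr_fun (hcomm a).symm v⟩
  obtain ⟨c, hc⟩ := endomorphism_simple_eq_smul_id k f
  refine ⟨c, ?_⟩
  have h := congrArg Action.Hom.hom hc
  simp only [Action.smul_hom, Action.id_hom, f] at h
  exact (congrArg (fun φ => φ.hom.hom) h).symm

theorem character_ne_zero_iff_sum_conj_ne_zero [IsAlgClosed k] [CharZero k] (g : G) :
    V.character g ≠ 0 ↔ ∑ h, V.ρ (h * g * h⁻¹) ≠ 0 := by
  have := V.nontrivial_of_simple
  obtain ⟨c, hc⟩ := V.exists_sum_conj_eq_smul_id g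
  have htrace : (Fintype.card G : k) * V.character g = c * Module.finrank k V := by
    have htr := congrArg (LinearMap.trace k V) hc
    rw [map_sum, map_smul, LinearMap.trace_id, smul_eq_mul] at htr
    have hsum : ∑ h : G, V.character (h * g * h⁻¹) = Fintype.card G * V.character g := by
      simp only [char_conj, sum_const, card_univ, nsmul_eq_mul]
    exact hsum.symm.trans htr
  have hcard : (Fintype.card G : k) ≠ 0 := Nat.cast_ne_zero.mpr Fintype.card_ne_zero
  have hdim : (Module.finrank k V : k) ≠ 0 := Nat.cast_ne_zero.mpr Module.finrank_pos.ne'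
  rw [hc, ← Module.End.one_eq_id, smul_ne_zero_iff_left one_ne_zero]
  constructor
  · rintro h rfl
    rw [zero_mul] at htrace
    exact mul_ne_zero hcard h htrace
  · rintro h h0
    rw [h0, mul_zero] at htrace
    exact mul_ne_zero h hdim htrace.symm

theorem character_ne_zero_iff_sum_commutatorElement_ne_zero [IsAlgClosed k] [CharZero k]
    (y : G) : V.character y ≠ 0 ↔ ∑ h : G, V.ρ ⁅h, y⁆ ≠ 0 := by
  have hconj : ∑ h, V.ρ (h * y * h⁻¹) = (∑ h : G, V.ρ ⁅h, y⁆) * V.ρ y := by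
    rw [sum_mul]
    exact sum_congr rfl fun h _ => by rw [← map_mul, commutatorElement_def, inv_mul_cancel_right]
  rw [character_ne_zero_iff_sum_conj_ne_zero, hconj, Ne,
    ((Group.isUnit y).map V.ρ).mul_left_eq_zero]

end FDRep

theorem FDRep.character_pow_ne_zero {G : Type*} [Group G] [Fintype G]
    (hG : (⊤ : Subgroup G).lowerCentralSeries 3 = ⊥) (hodd : Odd (Nat.card G))
    (V : FDRep ℂ G) [Simple V] {x : G} (hx : V.character x ≠ 0) (n : ℕ) :
    V.character (x ^ n) ≠ 0 := by
  rw [character_ne_zero_iff_sum_commutatorElement_ne_zero] at hx ⊢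
  obtain ⟨ν, v, hν, hv⟩ := Representation.exists_common_eigenvector_apply_ne_zero V.ρ
    (fun _ ha _ hb => ClassAtMostThree.commute_of_mem_commutator hG ha hb) hx
  have hv₀ : v ≠ 0 := fun h => hv (by rw [h, map_zero])
  have hsum (y : G) : (∑ h : G, V.ρ ⁅h, y⁆) v = (∑ h : G, ν ⁅h, y⁆) • v := by
    rw [LinearMap.sum_apply, sum_smul]
    exact sum_congr rfl fun h _ => hν _ (commutatorElement_mem_commutator h y)
  have hxν : ∑ h : G, ν ⁅h, x⁆ ≠ 0 := fun h0 => hv (by rw [hsum, h0, zero_smul])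
  have hnν := ClassAtMostThree.sum_commutatorElement_pow_ne_zero hG
    (Representation.eigenvalue_one hv₀ hν)
    (fun _ ha _ hb => Representation.eigenvalue_mul hv₀ hν ha hb) hodd hxν n
  intro h0
  have h := hsum (x ^ n)
  rw [h0, LinearMap.zero_apply, eq_comm, smul_eq_zero_iff_left hv₀] at h
  exact hnν h

theorem stmt14 {p : ℕ} (hp : p.Prime) (hodd : Odd p) {P : Type} [Group P] [Fintype P]
    (hP : IsPGroup p P) (hclass : Subgroup.lowerCentralSeries (⊤ : Subgroup P) 3 = ⊥)
    (χ : P → ℂ) (hχ : IsIrreducibleCharacter P χ)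
    (x : P) (hx : χ x ≠ 0) (m : ℤ) :
    χ (x ^ m) ≠ 0 := by
  have := Fact.mk hp
  obtain ⟨V, hV, hVχ⟩ := hχ
  have hoddP : Odd (Nat.card P) := by
    obtain ⟨k, hk⟩ := IsPGroup.iff_card.mp hP
    exact hk ▸ hodd.pow
  obtain ⟨n, hn⟩ := mem_powers_iff_mem_zpowers.mpr (Subgroup.zpow_mem_zpowers x m)
  rw [← hVχ] at hx ⊢
  rw [← hn]
  exact V.character_pow_ne_zero hclass hoddP hx n
end

section
/- Let P be a p-group with maximal abelian normal subgroup A of order p^m. Then |P| ≤ p^{m(m+1)/2}. -/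
open scoped BigOperators

/-!
Conjugation embeds `P / C_P(A)` into `Aut(A)`, and maximality forces `C_P(A) = A`: otherwise the
nontrivial normal subgroup `C_P(A)/A` of the `p`-group `P/A` contains a central element `xA ≠ 1`,
and the preimage of `⟨xA⟩` is a larger abelian normal subgroup. It remains to bound a `p`-group `Q`
acting faithfully on an abelian group `A` of order `p^m` by `p^(m(m-1)/2)`. `Q` fixes some `z` of
order `p`; the kernel of the action on `A/⟨z⟩` embeds into `Hom(A/⟨z⟩, ⟨z⟩)` via
`k ↦ (a ↦ k a / a)`, which has at most `p^(m-1)` elements, and induction on `m` bounds the rest.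
-/

open Subgroup

theorem Nat.mul_pred_div_two_add_self (m : ℕ) : m * (m - 1) / 2 + m = m * (m + 1) / 2 := by
  rw [← Finset.sum_range_id, ← Finset.sum_range_succ, Finset.sum_range_id, Nat.add_sub_cancel,
    mul_comm]

theorem card_monoidHom_le_of_isCyclic (B C : Type*) [CommGroup B] [Finite B] [Group C] [Finite C]
    [IsCyclic C] : Nat.card (B →* C) ≤ Nat.card B := by
  have : NeZero (Nat.card C) := ⟨Nat.card_pos.ne'⟩
  have : NeZero (Monoid.exponent B) := ⟨Monoid.exponent_ne_zero_of_finite⟩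
  let e : C ≃* rootsOfUnity (Nat.card C) ℂ :=
    mulEquivOfCyclicCardEq (Complex.card_rootsOfUnity _).symm
  have hcard := CommGroup.card_monoidHom_of_hasEnoughRootsOfUnity B ℂ
  have : Finite (B →* ℂˣ) := Nat.finite_of_card_ne_zero (hcard ▸ Nat.card_pos.ne')
  let ι : C →* ℂˣ := (rootsOfUnity _ ℂ).subtype.comp e.toMonoidHom
  refine hcard ▸ Nat.card_le_card_of_injective (ι.comp ·) fun f g hfg ↦ ?_
  ext b
  simpa [ι] using DFunLike.congr_fun hfg b

theorem IsPGroup.exists_orderOf_eq_prime_forall_apply_eq {p : ℕ} [Fact p.Prime] {Q A : Type*}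
    [Group Q] [Group A] [Finite A] (hQ : IsPGroup p Q) (hA : p ∣ Nat.card A)
    (φ : Q →* MulAut A) : ∃ z : A, orderOf z = p ∧ ∀ q, φ q z = z := by
  let := MulDistribMulAction.compHom A φ
  have hF : p ∣ Nat.card (FixedPoints.subgroup Q A) :=
    ((hQ.card_modEq_card_fixedPoints A).dvd_iff dvd_rfl).mp hA
  obtain ⟨⟨z, hz⟩, hzp⟩ := exists_prime_orderOf_dvd_card' p hF
  exact ⟨z, by rwa [Subgroup.orderOf_mk] at hzp, hz⟩

namespace MulAut

variable {Q A : Type*} [Group Q] [Group A]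

def quotient (φ : Q →* MulAut A) (Z : Subgroup A) [Z.Normal]
    (hZ : ∀ q, Z.map (φ q : A →* A) = Z) : Q →* MulAut (A ⧸ Z) :=
  MonoidHom.mk' (fun q ↦ QuotientGroup.congr Z Z (φ q) (hZ q)) fun q r ↦ by
    ext x
    induction x using QuotientGroup.induction_on
    simp [QuotientGroup.congr_mk]

@[simp]
theorem quotient_apply_mk (φ : Q →* MulAut A) (Z : Subgroup A) [Z.Normal]
    (hZ : ∀ q, Z.map (φ q : A →* A) = Z) (q : Q) (a : A) :
    quotient φ Z hZ q a = (φ q a : A ⧸ Z) :=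
  QuotientGroup.congr_mk _ _ _ (hZ q) a

end MulAut

theorem MulAut.card_ker_quotient_le {Q A : Type*} [Group Q] [CommGroup A] [Finite A]
    (φ : Q →* MulAut A) (hφ : Function.Injective φ) (Z : Subgroup A)
    (hZ : ∀ q, Z.map (φ q : A →* A) = Z) (hfix : ∀ q, ∀ z ∈ Z, φ q z = z) :
    Nat.card (quotient φ Z hZ).ker ≤ Nat.card (A ⧸ Z →* Z) := by
  have hmem : ∀ k ∈ (quotient φ Z hZ).ker, ∀ a, ((φ k : A →* A) / MonoidHom.id A) a ∈ Z :=
    fun k hk a ↦ QuotientGroup.eq_iff_div_mem.mp <| by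
      simpa using DFunLike.congr_fun hk (a : A ⧸ Z)
  let δ (k : (quotient φ Z hZ).ker) : A ⧸ Z →* Z :=
    QuotientGroup.lift Z (((φ k : A →* A) / MonoidHom.id A).codRestrict Z (hmem k k.2))
      fun z hz ↦ MonoidHom.mem_ker.mpr <| Subtype.ext <| by simp [hfix k z hz]
  have : Finite (A ⧸ Z →* Z) := Finite.of_injective _ DFunLike.coe_injective
  refine Nat.card_le_card_of_injective δ fun k k' h ↦ Subtype.ext (hφ (MulEquiv.ext fun a ↦ ?_))
  simpa [δ] using congr_arg Subtype.val (DFunLike.congr_fun h (a : A ⧸ Z))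

theorem IsPGroup.card_le_of_injective_mulAut {p : ℕ} [Fact p.Prime] {Q A : Type*} [Group Q]
    [CommGroup A] (hQ : IsPGroup p Q) {m : ℕ} (hA : Nat.card A = p ^ m) (φ : Q →* MulAut A)
    (hφ : Function.Injective φ) : Nat.card Q ≤ p ^ (m * (m - 1) / 2) := by
  induction m generalizing Q A with
  | zero =>
    have : Subsingleton A := (Nat.card_eq_one_iff_unique.mp (by simpa using hA)).1
    have : Subsingleton (MulAut A) := ⟨fun f g ↦ MulEquiv.ext fun _ ↦ Subsingleton.elim _ _⟩
    have : Subsingleton Q := hφ.subsingleton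
    simp
  | succ m ih =>
    have : Finite A :=
      Nat.finite_of_card_ne_zero (hA ▸ pow_ne_zero _ (Fact.out : p.Prime).ne_zero)
    obtain ⟨z, hz, hfix⟩ :=
      hQ.exists_orderOf_eq_prime_forall_apply_eq (hA ▸ dvd_pow_self p m.succ_ne_zero) φ
    set Z := zpowers z
    have hZ (q : Q) : Z.map (φ q : A →* A) = Z := by simp [Z, MonoidHom.map_zpowers, hfix q]
    have hZfix (q : Q) : ∀ a ∈ Z, φ q a = a := by rintro _ ⟨n, rfl⟩; simp [hfix q]
    have hcard : Nat.card (A ⧸ Z) = p ^ m := by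
      have := card_eq_card_quotient_mul_card_subgroup Z
      rw [hA, Nat.card_zpowers, hz, pow_succ] at this
      exact Nat.eq_of_mul_eq_mul_right (Fact.out : p.Prime).pos this.symm
    set ψ := MulAut.quotient φ Z hZ
    have hker : Nat.card ψ.ker ≤ p ^ m := calc
      Nat.card ψ.ker ≤ Nat.card (A ⧸ Z →* Z) := MulAut.card_ker_quotient_le φ hφ Z hZ hZfix
      _ ≤ Nat.card (A ⧸ Z) := card_monoidHom_le_of_isCyclic _ _
      _ = p ^ m := hcard
    have hquot := ih (hQ.to_quotient ψ.ker) hcard _ (QuotientGroup.kerLift_injective ψ)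
    calc Nat.card Q = Nat.card (Q ⧸ ψ.ker) * Nat.card ψ.ker :=
          card_eq_card_quotient_mul_card_subgroup _
      _ ≤ p ^ (m * (m - 1) / 2) * p ^ m := Nat.mul_le_mul hquot hker
      _ = p ^ ((m + 1) * (m + 1 - 1) / 2) := by
        rw [← pow_add, Nat.mul_pred_div_two_add_self, Nat.add_sub_cancel, mul_comm]

theorem Subgroup.isMulCommutative_of_le_centralizer {G : Type*} [Group G] {A B : Subgroup G}
    [A.Normal] (hB : B ≤ centralizer A) [IsCyclic (B.map (QuotientGroup.mk' A))] :
    IsMulCommutative B :=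
  ((QuotientGroup.mk' A).subgroupMap B).isMulCommutative_of_isCyclic_of_ker_le_center
    fun b hb ↦ mem_center_iff.mpr fun c ↦ Subtype.ext <| by
      have hbA : (b : G) ∈ A := by simpa using congr_arg Subtype.val (MonoidHom.mem_ker.mp hb)
      exact (mem_centralizer_iff.mp (hB c.2) b hbA).symm

theorem IsPGroup.centralizer_le_of_maximal {p : ℕ} [Fact p.Prime] {G : Type*} [Group G]
    [Finite G] (hG : IsPGroup p G) {A : Subgroup G} [A.Normal] [IsMulCommutative A]
    (hmax : ∀ B : Subgroup G, B.Normal → IsMulCommutative B → A ≤ B → B = A) :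
    centralizer A ≤ A := by
  by_contra hCA
  set π := QuotientGroup.mk' A
  set N := (centralizer A).map π
  have hN : p ∣ Nat.card N := by
    have : Nontrivial N := (nontrivial_iff_ne_bot N).mpr <| by
      rwa [Ne, Subgroup.map_eq_bot_iff, QuotientGroup.ker_mk']
    obtain ⟨k, hk, hcard⟩ := ((hG.to_quotient A).to_subgroup N).nontrivial_iff_card.mp this
    exact hcard ▸ dvd_pow_self p hk.ne'
  obtain ⟨⟨y, hyN⟩, hy, hfix⟩ :=
    (hG.to_quotient A).exists_orderOf_eq_prime_forall_apply_eq hN MulAut.conjNormal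
  obtain ⟨x, hxC, rfl⟩ := mem_map.mp hyN
  have hx : π x ∈ center (G ⧸ A) := mem_center_iff.mpr fun g ↦ by
    simpa [mul_inv_eq_iff_eq_mul] using congr_arg Subtype.val (hfix g)
  set B := (zpowers (π x)).comap π
  have hBnormal : B.Normal := by
    have : (zpowers (π x)).Normal := ⟨fun n hn g ↦ by
      rwa [mem_center_iff.mp (zpowers_le.mpr hx hn) g, mul_inv_cancel_right]⟩
    exact this.comap π
  have hBC : B ≤ centralizer A := by
    refine (comap_mono (zpowers_le.mpr hyN)).trans ?_
    rw [comap_map_eq, QuotientGroup.ker_mk']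
    exact sup_le le_rfl (le_centralizer_iff_isMulCommutative.mpr inferInstance)
  have : IsCyclic (B.map π) := by
    rw [map_comap_eq_self_of_surjective (QuotientGroup.mk'_surjective A)]
    infer_instance
  have hBA : B = A := hmax B hBnormal (isMulCommutative_of_le_centralizer hBC)
    (QuotientGroup.ker_mk' A ▸ ker_le_comap π _)
  have hx1 : π x = 1 := (QuotientGroup.eq_one_iff x).mpr (hBA ▸ mem_zpowers (π x))
  rw [Subgroup.orderOf_mk, hx1, orderOf_one] at hy
  exact (Fact.out : p.Prime).one_lt.ne hy

theorem MulAut.ker_conjNormal {G : Type*} [Group G] (H : Subgroup G) [H.Normal] :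
    (MulAut.conjNormal : G →* MulAut H).ker = centralizer H := by
  ext g
  simp [MulEquiv.ext_iff, Subtype.ext_iff, mem_centralizer_iff, eq_mul_inv_iff_mul_eq, eq_comm]

theorem stmt18 {p m : ℕ} (hp : p.Prime) {P : Type} [Group P] [Fintype P]
    (hP : IsPGroup p P) (A : Subgroup P) (hA : A.Normal) (hab : IsMulCommutative A)
    (hmax : ∀ B : Subgroup P, B.Normal → IsMulCommutative B → A ≤ B → B = A)
    (hcard : Nat.card A = p ^ m) :
    Nat.card P ≤ p ^ (m * (m + 1) / 2) := by
  have : Fact p.Prime := ⟨hp⟩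
  set K := (MulAut.conjNormal : P →* MulAut A).ker
  have hK : K = A := (MulAut.ker_conjNormal A).trans <|
    le_antisymm (hP.centralizer_le_of_maximal hmax) (le_centralizer_iff_isMulCommutative.mpr hab)
  have hquot : Nat.card (P ⧸ K) ≤ p ^ (m * (m - 1) / 2) := by
    -- the scoped instance makes `A` a `CommGroup`
    open IsMulCommutative in
    exact (hP.to_quotient K).card_le_of_injective_mulAut hcard _
      (QuotientGroup.kerLift_injective _)
  calc Nat.card P = Nat.card (P ⧸ K) * Nat.card K := card_eq_card_quotient_mul_card_subgroup K
    _ ≤ p ^ (m * (m - 1) / 2) * p ^ m := Nat.mul_le_mul hquot (by rw [hK, hcard])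
    _ = p ^ (m * (m + 1) / 2) := by rw [← pow_add, Nat.mul_pred_div_two_add_self]
end
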